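/- arXiv:2411.03577 — 3 statements merged into one kernel-verified Lean document; each statement's English description precedes it below -/
import Mathlib

section
/- For the hexagonal lattice and λ ∈ (−1,1)∖{0}, every point of M^ℂ_{λ,reg} ∩ Ω_a can be joined by a continuous path inside M^ℂ_{λ,reg} ∩ Ω_a to a point of M^ℂ_{λ,reg} ∩ 𝕋², where M^ℂ_λ = {z ∈ 𝕋²_ℂ : cos z₁ + cos z₂ + cos(z₁−z₂) = (3/2)(3λ²−1)} and Ω_a = {z : |Im z| < a}. -/
open Complex

/-- The complexified Fermi surface of the hexagonal lattice at energy `λ`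
(lifted from `𝕋²_ℂ` to `ℂ²`): `cos z₁ + cos z₂ + cos(z₁−z₂) = (3/2)(3λ²−1)`. -/
def hexFermiC (lam : ℝ) : Set (ℂ × ℂ) :=
  {z | Complex.cos z.1 + Complex.cos z.2 + Complex.cos (z.1 - z.2)
        = ((3 / 2 : ℝ) * (3 * lam ^ 2 - 1) : ℝ)}

/-- Its regular part: points where the gradient of
`p(z,λ) = λ² − (1/9)(3 + 2(cos z₁ + cos z₂ + cos(z₁−z₂)))` does not vanish. -/
def hexFermiReg (lam : ℝ) : Set (ℂ × ℂ) :=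
  {z | z ∈ hexFermiC lam ∧
    (Complex.sin z.1 + Complex.sin (z.1 - z.2) ≠ 0 ∨
     Complex.sin z.2 - Complex.sin (z.1 - z.2) ≠ 0)}

/-- `Ω_a = {z : |Im z| < a}`. -/
def hexStrip (a : ℝ) : Set (ℂ × ℂ) :=
  {z | z.1.im ^ 2 + z.2.im ^ 2 < a ^ 2}


/-!
In the coordinates `ζ = ((z₁ + z₂)/2, (z₁ - z₂)/2)` and `η_j = cos ζ_j` the surface reads
`η₂ (η₁ + η₂) = μ` with `μ = (9λ² - 1)/4 ∈ (-1/4, 2)`, and `cosh (Im ζ_j)` is the semi-major axis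
of the ellipse with foci `±1` through `η_j`. As `|Im z|² = 2 (|Im ζ₁|² + |Im ζ₂|²)`, it suffices to
move `(η₁, η₂)` on the curve without letting either semi-major axis grow, and to lift the motion
through `cos`.

For `μ ≠ 0`, first turn `η₂` along its circle `|η₂| = r` to the real axis: then `η₁ = μ/η₂ - η₂`
runs along an ellipse `α c + i β √(1 - c²)` with `α² - β² = -4μ < 1`, and on such ellipses the
semi-major axis decreases as `c²` grows. Then slide `η₂` along the real axis to `±1` (if `μ > 0`) or
`±√(-μ)` (if `μ < 0`), where `η₁` and `η₂` both lie in `[-1, 1]`, so that `ζ` is real. For these `μ`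
the surface has no critical points. For `μ = 0` the surface is the union of the lines
`z₁, z₂, z₁ - z₂ ∈ π + 2πℤ`; one shrinks the imaginary part of the free coordinate, ending where
its `sin` does not vanish.
-/

open Set

noncomputable section

/-! ### The semi-major axis and a lift of `cos` -/

/-- The semi-major axis of the ellipse with foci `±1` through `η`. -/
def semiMajor (η : ℂ) : ℝ := (‖η + 1‖ + ‖η - 1‖) / 2

lemma norm_add_one_sq (η : ℂ) : ‖η + 1‖ ^ 2 = (η.re + 1) ^ 2 + η.im ^ 2 := by
  rw [Complex.sq_norm, Complex.normSq_apply]; simp; ring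

lemma norm_sub_one_sq (η : ℂ) : ‖η - 1‖ ^ 2 = (η.re - 1) ^ 2 + η.im ^ 2 := by
  rw [Complex.sq_norm, Complex.normSq_apply]; simp; ring

lemma continuous_semiMajor : Continuous semiMajor := by
  unfold semiMajor; fun_prop

lemma one_le_semiMajor (η : ℂ) : 1 ≤ semiMajor η := by
  have h := norm_sub_le (η + 1) (η - 1)
  rw [show η + 1 - (η - 1) = 2 by ring, Complex.norm_two] at h
  unfold semiMajor; linarith

lemma abs_re_le_semiMajor (η : ℂ) : |η.re| ≤ semiMajor η := by
  have h₁ := Complex.abs_re_le_norm (η + 1)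
  have h₂ := Complex.abs_re_le_norm (η - 1)
  have h₃ := abs_add_le (η.re + 1) (η.re - 1)
  simp only [Complex.add_re, Complex.sub_re, Complex.one_re] at h₁ h₂
  rw [show η.re + 1 + (η.re - 1) = 2 * η.re by ring, abs_mul, abs_two] at h₃
  unfold semiMajor; linarith

lemma semiMajor_quartic (η : ℂ) :
    semiMajor η ^ 4 - (η.re ^ 2 + η.im ^ 2 + 1) * semiMajor η ^ 2 + η.re ^ 2 = 0 := by
  -- with `a = ‖η + 1‖`, `b = ‖η - 1‖`: `|η|² + 1 = (a² + b²)/2` and `Re η = (a² - b²)/4`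
  unfold semiMajor
  linear_combination
    ((‖η + 1‖ + ‖η - 1‖) ^ 2 / 8 - (4 * η.re + ‖η + 1‖ ^ 2 - ‖η - 1‖ ^ 2) / 16) *
      norm_add_one_sq η +
    ((‖η + 1‖ + ‖η - 1‖) ^ 2 / 8 + (4 * η.re + ‖η + 1‖ ^ 2 - ‖η - 1‖ ^ 2) / 16) *
      norm_sub_one_sq η

lemma two_mul_semiMajor_sq (η : ℂ) :
    2 * semiMajor η ^ 2 = η.re ^ 2 + η.im ^ 2 + 1 +
      √((η.re ^ 2 + η.im ^ 2 + 1) ^ 2 - 4 * η.re ^ 2) := by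
  have hS : η.re ^ 2 + η.im ^ 2 + 1 ≤ 2 * semiMajor η ^ 2 := by
    unfold semiMajor
    nlinarith [mul_nonneg (norm_nonneg (η + 1)) (norm_nonneg (η - 1)), norm_add_one_sq η,
      norm_sub_one_sq η]
  rw [show (η.re ^ 2 + η.im ^ 2 + 1) ^ 2 - 4 * η.re ^ 2
      = (2 * semiMajor η ^ 2 - (η.re ^ 2 + η.im ^ 2 + 1)) ^ 2 by
    linear_combination (-4) * semiMajor_quartic η, Real.sqrt_sq (by linarith)]
  ring

lemma semiMajor_cos (ζ : ℂ) : semiMajor (Complex.cos ζ) = Real.cosh ζ.im := by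
  have hcos : Complex.cos ζ = ↑(Real.cos ζ.re * Real.cosh ζ.im)
      + ↑(-(Real.sin ζ.re * Real.sinh ζ.im)) * Complex.I := by
    conv_lhs => rw [← Complex.re_add_im ζ]
    rw [Complex.cos_add_mul_I]
    push_cast [← Complex.ofReal_cos, ← Complex.ofReal_sin, ← Complex.ofReal_cosh,
      ← Complex.ofReal_sinh]
    ring
  -- `|cos ζ ± 1| = cosh y ± cos x`, from `cos² + sin² = 1` and `cosh² - sinh² = 1`
  have key : ∀ e : ℝ, e = 1 ∨ e = -1 →
      ‖Complex.cos ζ + e‖ = Real.cosh ζ.im + e * Real.cos ζ.re := by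
    intro e he
    rw [hcos, show ((Real.cos ζ.re * Real.cosh ζ.im : ℝ) : ℂ)
        + ↑(-(Real.sin ζ.re * Real.sinh ζ.im)) * Complex.I + e
      = ↑(Real.cos ζ.re * Real.cosh ζ.im + e) + ↑(-(Real.sin ζ.re * Real.sinh ζ.im)) * Complex.I
        by push_cast; ring, Complex.norm_def, Complex.normSq_add_mul_I]
    have he2 : e ^ 2 = 1 := by rcases he with rfl | rfl <;> norm_num
    rw [← Real.sqrt_sq (x := Real.cosh ζ.im + e * Real.cos ζ.re)]
    · congr 1
      linear_combination (1 - Real.cos ζ.re ^ 2) * he2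
        + (Real.cosh ζ.im ^ 2 - 1) * Real.sin_sq_add_cos_sq ζ.re
        - Real.sin ζ.re ^ 2 * Real.cosh_sq ζ.im
    · have := Real.one_le_cosh ζ.im
      rcases he with rfl | rfl <;> linarith [Real.neg_one_le_cos ζ.re, Real.cos_le_one ζ.re]
  have h₁ := key 1 (Or.inl rfl)
  have h₂ := key (-1) (Or.inr rfl)
  push_cast at h₁ h₂
  unfold semiMajor
  rw [sub_eq_add_neg, h₁, h₂]
  ring

lemma semiMajor_ofReal (x : ℝ) : semiMajor x = max |x| 1 := by
  unfold semiMajor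
  rw [show (x : ℂ) + 1 = ((x + 1 : ℝ) : ℂ) by push_cast; ring,
    show (x : ℂ) - 1 = ((x - 1 : ℝ) : ℂ) by push_cast; ring, Complex.norm_real, Complex.norm_real,
    Real.norm_eq_abs, Real.norm_eq_abs]
  rcases le_total x (-1) with h | h
  · rw [abs_of_nonpos (by linarith : x + 1 ≤ 0), abs_of_nonpos (by linarith : x - 1 ≤ 0),
      abs_of_nonpos (by linarith : x ≤ 0), max_eq_left (by linarith)]
    ring
  rcases le_total x 1 with h' | h'
  · rw [abs_of_nonneg (by linarith : 0 ≤ x + 1), abs_of_nonpos (by linarith : x - 1 ≤ 0),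
      max_eq_right (abs_le.mpr ⟨h, h'⟩)]
    ring
  · rw [abs_of_nonneg (by linarith : 0 ≤ x + 1), abs_of_nonneg (by linarith : 0 ≤ x - 1),
      abs_of_nonneg (by linarith : 0 ≤ x), max_eq_left h']
    ring

lemma abs_im_le_abs_im_iff (ζ ζ' : ℂ) :
    |ζ.im| ≤ |ζ'.im| ↔ semiMajor (Complex.cos ζ) ≤ semiMajor (Complex.cos ζ') := by
  rw [semiMajor_cos, semiMajor_cos, Real.cosh_le_cosh]

lemma im_eq_zero_of_cos_eq_ofReal {ζ : ℂ} {x : ℝ} (h : Complex.cos ζ = x) (hx : |x| ≤ 1) :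
    ζ.im = 0 := by
  have h1 : semiMajor (Complex.cos ζ) ≤ semiMajor (Complex.cos 0) := by
    rw [h, semiMajor_ofReal, Complex.cos_zero, ← Complex.ofReal_one, semiMajor_ofReal]
    simp [hx]
  simpa using (abs_im_le_abs_im_iff ζ 0).mpr h1

/-- A continuous right inverse of `cos` on the closed lower half-plane. -/
def cosLift (η : ℂ) : ℂ :=
  Real.arccos (η.re / semiMajor η) + Real.arcosh (semiMajor η) * Complex.I

lemma continuous_cosLift : Continuous cosLift := by
  have h₁ : Continuous fun η : ℂ => Real.arccos (η.re / semiMajor η) :=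
    Real.continuous_arccos.comp (Complex.continuous_re.div continuous_semiMajor
      fun η => (one_pos.trans_le (one_le_semiMajor η)).ne')
  have h₂ : Continuous fun η : ℂ => Real.arcosh (semiMajor η) :=
    Real.continuousOn_arcosh.comp_continuous continuous_semiMajor one_le_semiMajor
  exact (Complex.continuous_ofReal.comp h₁).add
    ((Complex.continuous_ofReal.comp h₂).mul continuous_const)

lemma cos_cosLift (η : ℂ) : Complex.cos (cosLift η) = η.re - |η.im| * Complex.I := by
  have hE : 1 ≤ semiMajor η := one_le_semiMajor η
  have hE0 : 0 < semiMajor η := by linarith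
  have hx : |η.re / semiMajor η| ≤ 1 := by
    rw [abs_div, abs_of_pos hE0, div_le_one hE0]
    exact abs_re_le_semiMajor η
  rw [abs_le] at hx
  have hprod : √(1 - (η.re / semiMajor η) ^ 2) * √(semiMajor η ^ 2 - 1) = |η.im| := by
    rw [← Real.sqrt_mul (by nlinarith), ← Real.sqrt_sq_eq_abs]
    congr 1
    field_simp
    linear_combination semiMajor_quartic η
  unfold cosLift
  rw [Complex.cos_add_mul_I, ← Complex.ofReal_cos, ← Complex.ofReal_sin, ← Complex.ofReal_cosh,
    ← Complex.ofReal_sinh, Real.cos_arccos hx.1 hx.2, Real.sin_arccos, Real.cosh_arcosh hE,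
    Real.sinh_arcosh hE, ← hprod, ← Complex.ofReal_mul, div_mul_cancel₀ _ hE0.ne']
  push_cast
  ring

lemma cos_cosLift_of_im_nonpos {η : ℂ} (h : η.im ≤ 0) : Complex.cos (cosLift η) = η := by
  rw [cos_cosLift, abs_of_nonpos h]
  apply Complex.ext <;> simp

lemma cos_conj_cosLift_of_im_nonneg {η : ℂ} (h : 0 ≤ η.im) :
    Complex.cos (starRingEnd ℂ (cosLift η)) = η := by
  rw [Complex.cos_conj, cos_cosLift, abs_of_nonneg h]
  apply Complex.ext <;> simp

/-- `cos` is not a covering map, but on each closed half-plane it has a continuous right inverse,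
so paths whose imaginary part keeps its sign lift. -/
lemma exists_cos_lift {η : ℝ → ℂ} (hη : ContinuousOn η (Icc 0 1))
    (hsign : (∀ t ∈ Icc (0 : ℝ) 1, 0 ≤ (η t).im) ∨ ∀ t ∈ Icc (0 : ℝ) 1, (η t).im ≤ 0)
    {ζ₀ : ℂ} (h₀ : Complex.cos ζ₀ = η 0) :
    ∃ ζ : ℝ → ℂ, ContinuousOn ζ (Icc 0 1) ∧ ζ 0 = ζ₀ ∧
      ∀ t ∈ Icc (0 : ℝ) 1, Complex.cos (ζ t) = η t := by
  obtain ⟨L, hL, hLη⟩ : ∃ L : ℂ → ℂ, Continuous L ∧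
      ∀ t ∈ Icc (0 : ℝ) 1, Complex.cos (L (η t)) = η t := by
    rcases hsign with h | h
    · exact ⟨fun w => starRingEnd ℂ (cosLift w), Complex.continuous_conj.comp continuous_cosLift,
        fun t ht => cos_conj_cosLift_of_im_nonneg (h t ht)⟩
    · exact ⟨cosLift, continuous_cosLift, fun t ht => cos_cosLift_of_im_nonpos (h t ht)⟩
  have h0 : (0 : ℝ) ∈ Icc (0 : ℝ) 1 := ⟨le_rfl, zero_le_one⟩
  obtain ⟨k, hk | hk⟩ := Complex.cos_eq_cos_iff.mp ((hLη 0 h0).trans h₀.symm)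
  · refine ⟨fun t => L (η t) + k * (2 * Real.pi), ?_, by rw [hk]; ring, fun t ht => ?_⟩
    · exact (hL.comp_continuousOn hη).add continuousOn_const
    · rw [Complex.cos_add_int_mul_two_pi, hLη t ht]
  · refine ⟨fun t => k * (2 * Real.pi) - L (η t), ?_, by rw [hk]; ring, fun t ht => ?_⟩
    · exact continuousOn_const.sub (hL.comp_continuousOn hη)
    · rw [Complex.cos_int_mul_two_pi_sub, hLη t ht]

/-! ### Semi-major axes along ellipses and real segments -/

lemma add_sqrt_le_two_mul {P C Y : ℝ} (hP : P ≤ 2 * Y) (h : 0 ≤ Y ^ 2 - P * Y + C) :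
    P + √(P ^ 2 - 4 * C) ≤ 2 * Y := by
  have : √(P ^ 2 - 4 * C) ≤ 2 * Y - P := Real.sqrt_le_iff.mpr ⟨by linarith, by nlinarith⟩
  linarith

/-- Bounds on twice the larger root `Q + R` of `X² - Q X + (b + q) τ`, `Q = qτ + b + 1`. -/
lemma larger_root_bounds {b q τ R : ℝ} (hb : 0 ≤ b) (hq : q < 1) (hbq : 0 ≤ b + q)
    (hτ : τ ∈ Icc (0 : ℝ) 1) (hR0 : 0 ≤ R)
    (hRsq : R ^ 2 = (q * τ + b + 1) ^ 2 - 4 * (b + q) * τ) :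
    q * (q * τ + b + 1 + R) ≤ 2 * (b + q) ∧ q * (1 - τ) ≤ R := by
  obtain ⟨hτ0, hτ1⟩ := hτ
  constructor
  · rcases le_or_gt q 0 with hq0 | hq0
    · have hQ : 0 ≤ q * τ + b + 1 + R := by nlinarith
      nlinarith [mul_nonneg (neg_nonneg.2 hq0) hQ]
    · have hK : 0 ≤ 2 * (b + q) - q * (q * τ + b + 1) := by
        nlinarith [mul_nonneg hb (by linarith : (0 : ℝ) ≤ 2 - q),
          mul_nonneg hq0.le (sub_nonneg.2 hτ1)]
      have hdiff : (2 * (b + q) - q * (q * τ + b + 1)) ^ 2 - (q * R) ^ 2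
          = 4 * (b + q) * (b * (1 - q)) := by
        rw [mul_pow, hRsq]; ring
      have : (q * R) ^ 2 ≤ (2 * (b + q) - q * (q * τ + b + 1)) ^ 2 := by
        nlinarith [mul_nonneg hbq (mul_nonneg hb (sub_nonneg.2 hq.le))]
      nlinarith [le_of_sq_le_sq this hK]
  · refine le_of_sq_le_sq ?_ hR0
    have hbq' : 0 ≤ (b + 1) ^ 2 - q ^ 2 := by nlinarith
    nlinarith [mul_nonneg (sub_nonneg.2 hτ1) hbq', mul_nonneg hτ0 (sq_nonneg (b + q - 1))]

/-- `qτ + √(…)` is `2X₊(τ) - b - 1` for the larger root `X₊(τ)` of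
`X² - (qτ + b + 1) X + (b + q) τ`, and `X₊(τ)` lies above both roots at any `τ' ≥ τ`. -/
lemma antitoneOn_ellipse_aux {b q : ℝ} (hb : 0 ≤ b) (hq : q < 1) (hbq : 0 ≤ b + q) :
    AntitoneOn (fun τ => q * τ + √((q * τ + b + 1) ^ 2 - 4 * (b + q) * τ)) (Icc 0 1) := by
  intro τ hτ τ' hτ' hle
  obtain ⟨R, hR0, hRsq, hR⟩ : ∃ R, 0 ≤ R ∧ R ^ 2 = (q * τ + b + 1) ^ 2 - 4 * (b + q) * τ ∧
      √((q * τ + b + 1) ^ 2 - 4 * (b + q) * τ) = R := by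
    refine ⟨_, Real.sqrt_nonneg _, Real.sq_sqrt ?_, rfl⟩
    have hbq' : 0 ≤ (b + 1) ^ 2 - q ^ 2 := by nlinarith
    nlinarith [mul_nonneg (sub_nonneg.2 hτ.2) hbq', mul_nonneg hτ.1 (sq_nonneg (b + q - 1)),
      sq_nonneg (q * (1 - τ))]
  obtain ⟨hqR, hR1⟩ := larger_root_bounds hb hq hbq hτ hR0 hRsq
  show _ ≤ q * τ + √_
  rw [hR]
  have key := add_sqrt_le_two_mul (P := q * τ' + b + 1) (C := (b + q) * τ')
    (Y := (q * τ + b + 1 + R) / 2) ?_ ?_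
  · rw [show 4 * ((b + q) * τ') = 4 * (b + q) * τ' by ring] at key
    linarith
  · rcases le_or_gt q 0 with hq0 | hq0
    · nlinarith
    · nlinarith [mul_le_mul_of_nonneg_left hτ'.2 hq0.le]
  · have : ((q * τ + b + 1 + R) / 2) ^ 2 - (q * τ' + b + 1) * ((q * τ + b + 1 + R) / 2)
        + (b + q) * τ' = (τ' - τ) * ((b + q) - q * ((q * τ + b + 1 + R) / 2)) := by
      linear_combination (1 / 4) * hRsq
    rw [this]
    exact mul_nonneg (by linarith) (by linarith)

def ellipsePoint (α β c : ℝ) : ℂ := ↑(α * c) + ↑(β * √(1 - c ^ 2)) * Complex.I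

@[simp] lemma ellipsePoint_re (α β c : ℝ) : (ellipsePoint α β c).re = α * c := by
  simp [ellipsePoint]

@[simp] lemma ellipsePoint_im (α β c : ℝ) : (ellipsePoint α β c).im = β * √(1 - c ^ 2) := by
  simp [ellipsePoint]

lemma continuous_ellipsePoint (α β : ℝ) : Continuous (ellipsePoint α β) := by
  unfold ellipsePoint; fun_prop

lemma ellipsePoint_im_sign (α β : ℝ) :
    (∀ c, 0 ≤ (ellipsePoint α β c).im) ∨ ∀ c, (ellipsePoint α β c).im ≤ 0 := by
  rcases le_total 0 β with h | h
  · exact Or.inl fun c => by rw [ellipsePoint_im]; positivity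
  · exact Or.inr fun c => by
      rw [ellipsePoint_im]; exact mul_nonpos_of_nonpos_of_nonneg h (Real.sqrt_nonneg _)

lemma semiMajor_ellipsePoint_le {α β c c' : ℝ} (h : α ^ 2 - β ^ 2 < 1) (hcc : c ^ 2 ≤ c' ^ 2)
    (hc' : c' ^ 2 ≤ 1) : semiMajor (ellipsePoint α β c') ≤ semiMajor (ellipsePoint α β c) := by
  have hsq : ∀ c : ℝ, c ^ 2 ≤ 1 → 2 * semiMajor (ellipsePoint α β c) ^ 2 = β ^ 2 + 1 +
      ((α ^ 2 - β ^ 2) * c ^ 2 +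
        √(((α ^ 2 - β ^ 2) * c ^ 2 + β ^ 2 + 1) ^ 2 - 4 * (β ^ 2 + (α ^ 2 - β ^ 2)) * c ^ 2)) := by
    intro c hc
    rw [two_mul_semiMajor_sq, ellipsePoint_re, ellipsePoint_im, mul_pow β,
      Real.sq_sqrt (by linarith), show ((α * c) ^ 2 + β ^ 2 * (1 - c ^ 2) + 1) ^ 2 - 4 * (α * c) ^ 2
        = ((α ^ 2 - β ^ 2) * c ^ 2 + β ^ 2 + 1) ^ 2 - 4 * (β ^ 2 + (α ^ 2 - β ^ 2)) * c ^ 2 by ring]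
    ring
  have hmono := antitoneOn_ellipse_aux (sq_nonneg β) h (by nlinarith [sq_nonneg α])
    ⟨sq_nonneg c, hcc.trans hc'⟩ ⟨sq_nonneg c', hc'⟩ hcc
  simp only at hmono
  rw [← pow_le_pow_iff_left₀ (by linarith [one_le_semiMajor (ellipsePoint α β c')])
    (by linarith [one_le_semiMajor (ellipsePoint α β c)]) two_ne_zero]
  linarith [hsq c (hcc.trans hc'), hsq c' hc']

lemma semiMajor_ofReal_mul {d : ℝ} (hd : |d| = 1) (y : ℝ) : semiMajor ↑(d * y) = semiMajor ↑y := by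
  rw [semiMajor_ofReal, semiMajor_ofReal, abs_mul, hd, one_mul]

lemma semiMajor_le_of_mem_uIcc {x x₁ y : ℝ} (hy : y ∈ uIcc x x₁) (hx₁ : |x₁| ≤ 1) :
    semiMajor y ≤ semiMajor x := by
  have hy' : |y| ≤ max |x| |x₁| := by
    rcases mem_uIcc.1 hy with ⟨h₁, h₂⟩ | ⟨h₁, h₂⟩
    · exact abs_le_max_abs_abs h₁ h₂
    · exact max_comm |x₁| |x| ▸ abs_le_max_abs_abs h₁ h₂
  rw [semiMajor_ofReal, semiMajor_ofReal]
  exact max_le (hy'.trans (max_le_max le_rfl hx₁)) (le_max_right _ _)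

/-! ### Paths on `cos ζ₂ (cos ζ₁ + cos ζ₂) = μ` -/

/-- The Fermi surface in the coordinates `ζ = ((z₁ + z₂)/2, (z₁ - z₂)/2)`
(see `mem_hexFermiC_iff`). -/
def zetaLevel (μ : ℝ) : Set (ℂ × ℂ) :=
  {w | Complex.cos w.2 * (Complex.cos w.1 + Complex.cos w.2) = μ}

def imBelow (ζ : ℂ × ℂ) : Set (ℂ × ℂ) := {w | |w.1.im| ≤ |ζ.1.im| ∧ |w.2.im| ≤ |ζ.2.im|}

lemma imBelow_subset {ζ w : ℂ × ℂ} (h : w ∈ imBelow ζ) : imBelow w ⊆ imBelow ζ :=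
  fun _ hv => ⟨hv.1.trans h.1, hv.2.trans h.2⟩

lemma cos_snd_ne_zero {μ : ℝ} (hμ0 : μ ≠ 0) {ζ : ℂ × ℂ} (hζ : ζ ∈ zetaLevel μ) :
    Complex.cos ζ.2 ≠ 0 := by
  intro h
  have : Complex.cos ζ.2 * (Complex.cos ζ.1 + Complex.cos ζ.2) = μ := hζ
  rw [h, zero_mul] at this
  exact hμ0 (by exact_mod_cast this.symm)

/-- By `abs_im_le_abs_im_iff`, bounding `semiMajor η_j` along the path bounds `|Im ζ_j|` along the
lift. -/
lemma exists_joinedIn_of_cos_paths {μ : ℝ} (hμ0 : μ ≠ 0) {η₁ η₂ : ℝ → ℂ}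
    (hη₁ : ContinuousOn η₁ (Icc 0 1)) (hη₂ : ContinuousOn η₂ (Icc 0 1))
    (hs₁ : (∀ t ∈ Icc (0 : ℝ) 1, 0 ≤ (η₁ t).im) ∨ ∀ t ∈ Icc (0 : ℝ) 1, (η₁ t).im ≤ 0)
    (hs₂ : (∀ t ∈ Icc (0 : ℝ) 1, 0 ≤ (η₂ t).im) ∨ ∀ t ∈ Icc (0 : ℝ) 1, (η₂ t).im ≤ 0)
    (hμ : ∀ t ∈ Icc (0 : ℝ) 1, η₂ t * (η₁ t + η₂ t) = μ)
    (hE₁ : ∀ t ∈ Icc (0 : ℝ) 1, semiMajor (η₁ t) ≤ semiMajor (η₁ 0))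
    (hE₂ : ∀ t ∈ Icc (0 : ℝ) 1, semiMajor (η₂ t) ≤ semiMajor (η₂ 0))
    {ζ : ℂ × ℂ} (hζ : ζ ∈ zetaLevel μ) (h₂ : Complex.cos ζ.2 = η₂ 0) :
    ∃ ζ', JoinedIn (zetaLevel μ ∩ imBelow ζ) ζ ζ' ∧
      Complex.cos ζ'.1 = η₁ 1 ∧ Complex.cos ζ'.2 = η₂ 1 := by
  have h0 : (0 : ℝ) ∈ Icc (0 : ℝ) 1 := ⟨le_rfl, zero_le_one⟩
  have h1 : (1 : ℝ) ∈ Icc (0 : ℝ) 1 := ⟨zero_le_one, le_rfl⟩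
  have h₁ : Complex.cos ζ.1 = η₁ 0 := by
    have hζ' : Complex.cos ζ.2 * (Complex.cos ζ.1 + Complex.cos ζ.2) = μ := hζ
    rw [h₂, ← hμ 0 h0] at hζ'
    exact add_right_cancel (mul_left_cancel₀ (h₂ ▸ cos_snd_ne_zero hμ0 hζ) hζ')
  obtain ⟨ζ₁, hc₁, hζ₁0, hζ₁⟩ := exists_cos_lift hη₁ hs₁ h₁
  obtain ⟨ζ₂, hc₂, hζ₂0, hζ₂⟩ := exists_cos_lift hη₂ hs₂ h₂
  refine ⟨(ζ₁ 1, ζ₂ 1), JoinedIn.ofLine (f := fun t => (ζ₁ t, ζ₂ t)) (hc₁.prodMk hc₂)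
    (by rw [hζ₁0, hζ₂0]) rfl ?_, hζ₁ 1 h1, hζ₂ 1 h1⟩
  rintro _ ⟨t, ht, rfl⟩
  refine ⟨?_, ?_, ?_⟩
  · show Complex.cos (ζ₂ t) * (Complex.cos (ζ₁ t) + Complex.cos (ζ₂ t)) = μ
    rw [hζ₁ t ht, hζ₂ t ht]
    exact hμ t ht
  · rw [abs_im_le_abs_im_iff, hζ₁ t ht, h₁]
    exact hE₁ t ht
  · rw [abs_im_le_abs_im_iff, hζ₂ t ht, h₂]
    exact hE₂ t ht

lemma exists_eq_ellipsePoint {η : ℂ} (hη : η ≠ 0) :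
    ∃ s : ℝ, s ^ 2 = 1 ∧ η = ellipsePoint ‖η‖ (s * ‖η‖) (η.re / ‖η‖) := by
  have hr : 0 < ‖η‖ := norm_pos_iff.2 hη
  have hc : 1 - (η.re / ‖η‖) ^ 2 = (η.im / ‖η‖) ^ 2 := by
    have : η.re ^ 2 + η.im ^ 2 = ‖η‖ ^ 2 := by
      rw [Complex.sq_norm, Complex.normSq_apply]; ring
    field_simp; linarith
  rcases le_total 0 η.im with h | h
  · refine ⟨1, by norm_num, Complex.ext ?_ ?_⟩
    · rw [ellipsePoint_re]; field_simp
    · rw [ellipsePoint_im, hc, Real.sqrt_sq (div_nonneg h hr.le)]; field_simp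
  · refine ⟨-1, by norm_num, Complex.ext ?_ ?_⟩
    · rw [ellipsePoint_re]; field_simp
    · rw [ellipsePoint_im, hc, Real.sqrt_sq_eq_abs, abs_div, abs_of_nonpos h, abs_of_pos hr]
      field_simp

lemma ellipsePoint_mul_add_eq {μ r s c : ℝ} (hr : r ≠ 0) (hs : s ^ 2 = 1) (hc : c ^ 2 ≤ 1) :
    ellipsePoint r (s * r) c *
      (ellipsePoint (μ / r - r) (-(s * (μ / r + r))) c + ellipsePoint r (s * r) c) = μ := by
  have hw := Real.sq_sqrt (sub_nonneg.2 hc)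
  have hμr : μ / r * r = μ := div_mul_cancel₀ μ hr
  apply Complex.ext <;> simp only [Complex.mul_re, Complex.mul_im, Complex.add_re,
    Complex.add_im, ellipsePoint_re, ellipsePoint_im, Complex.ofReal_re, Complex.ofReal_im]
  · linear_combination (c ^ 2 + s ^ 2 * √(1 - c ^ 2) ^ 2) * hμr + μ * hw
      + μ * √(1 - c ^ 2) ^ 2 * hs
  · ring

lemma exists_path_sq_mono {c₀ : ℝ} (h : c₀ ^ 2 ≤ 1) :
    ∃ c : ℝ → ℝ, Continuous c ∧ c 0 = c₀ ∧ c 1 ^ 2 = 1 ∧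
      ∀ t ∈ Icc (0 : ℝ) 1, c₀ ^ 2 ≤ c t ^ 2 ∧ c t ^ 2 ≤ 1 := by
  obtain ⟨d, hd, hc₀d⟩ : ∃ d : ℝ, d ^ 2 = 1 ∧ 0 ≤ c₀ * d := by
    rcases le_total 0 c₀ with h | h
    · exact ⟨1, by norm_num, by linarith⟩
    · exact ⟨-1, by norm_num, by linarith⟩
  have hc₀d1 : c₀ * d ≤ 1 := by nlinarith
  refine ⟨fun t => c₀ + t * (d - c₀), by fun_prop, by ring, by linear_combination hd,
    fun t ht => ?_⟩
  -- multiplied by `d`, the path increases from `|c₀|` to `1`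
  have e : ∀ x : ℝ, x ^ 2 = (x * d) ^ 2 := fun x => by linear_combination (-x ^ 2) * hd
  have hm : (c₀ + t * (d - c₀)) * d = c₀ * d + t * (1 - c₀ * d) := by linear_combination t * hd
  have hv0 : c₀ * d ≤ c₀ * d + t * (1 - c₀ * d) := by
    nlinarith [mul_nonneg ht.1 (sub_nonneg.2 hc₀d1)]
  have hv1 : c₀ * d + t * (1 - c₀ * d) ≤ 1 := by
    nlinarith [mul_nonneg (sub_nonneg.2 ht.2) (sub_nonneg.2 hc₀d1)]
  rw [e c₀, e (c₀ + t * (d - c₀)), hm]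
  constructor <;> nlinarith

/-- `η₂ = r (c + i s √(1 - c²))` turns to the real axis, `η₁ = μ/η₂ - η₂` follows. -/
lemma exists_joinedIn_im_cos_snd_eq_zero {μ : ℝ} (hμ : -1 / 4 < μ) (hμ0 : μ ≠ 0) {ζ : ℂ × ℂ}
    (hζ : ζ ∈ zetaLevel μ) :
    ∃ ζ', JoinedIn (zetaLevel μ ∩ imBelow ζ) ζ ζ' ∧ (Complex.cos ζ'.2).im = 0 := by
  set η := Complex.cos ζ.2
  have hη : η ≠ 0 := cos_snd_ne_zero hμ0 hζ
  have hr : 0 < ‖η‖ := norm_pos_iff.2 hη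
  obtain ⟨s, hs, hsη⟩ := exists_eq_ellipsePoint hη
  obtain ⟨c, hc, hc0, hc1, hcI⟩ :=
    exists_path_sq_mono (sq_le_one_iff_abs_le_one _ |>.2 (Complex.abs_re_div_norm_le_one η))
  obtain ⟨ζ', hj, -, h₂⟩ := exists_joinedIn_of_cos_paths hμ0
    (η₁ := fun t => ellipsePoint (μ / ‖η‖ - ‖η‖) (-(s * (μ / ‖η‖ + ‖η‖))) (c t))
    (η₂ := fun t => ellipsePoint ‖η‖ (s * ‖η‖) (c t))
    ((continuous_ellipsePoint _ _).comp hc).continuousOn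
    ((continuous_ellipsePoint _ _).comp hc).continuousOn
    ((ellipsePoint_im_sign _ _).imp (fun h t _ => h _) (fun h t _ => h _))
    ((ellipsePoint_im_sign _ _).imp (fun h t _ => h _) (fun h t _ => h _))
    (fun t ht => ellipsePoint_mul_add_eq hr.ne' hs (hcI t ht).2)
    (fun t ht => by
      refine semiMajor_ellipsePoint_le ?_ (hc0 ▸ (hcI t ht).1) (hcI t ht).2
      -- `α² - β² = -4μ < 1`
      have : (μ / ‖η‖) * ‖η‖ = μ := div_mul_cancel₀ μ hr.ne'
      nlinarith)
    (fun t ht => semiMajor_ellipsePoint_le (by nlinarith) (hc0 ▸ (hcI t ht).1) (hcI t ht).2)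
    hζ (by rw [hc0]; exact hsη)
  refine ⟨ζ', hj, ?_⟩
  rw [h₂, ellipsePoint_im, hc1, sub_self, Real.sqrt_zero, mul_zero]

/-- `ρ ↦ μ/ρ - ρ` is monotone between `r` and `ρ₁`: for `μ < 0` its critical point `√(-μ) = ρ₁` is
an endpoint. -/
lemma div_sub_self_mem_uIcc {μ r ρ₁ ρ : ℝ} (hr : 0 < r) (hρ₁ : 0 < ρ₁) (hρ : ρ ∈ uIcc r ρ₁)
    (hμ : 0 < μ ∨ μ = -ρ₁ ^ 2) : μ / ρ - ρ ∈ uIcc (μ / r - r) (μ / ρ₁ - ρ₁) := by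
  have hρ0 : 0 < ρ := by rcases mem_uIcc.1 hρ with h | h <;> linarith [h.1]
  have e₁ : μ / ρ - ρ - (μ / r - r) = (r - ρ) * (r * ρ + μ) / (r * ρ) := by
    field_simp; ring
  have e₂ : μ / ρ₁ - ρ₁ - (μ / ρ - ρ) = (ρ - ρ₁) * (ρ * ρ₁ + μ) / (ρ * ρ₁) := by
    field_simp; ring
  have hrρ : 0 < r * ρ := mul_pos hr hρ0
  have hρρ₁ : 0 < ρ * ρ₁ := mul_pos hρ0 hρ₁
  have key : (0 ≤ (r - ρ) * (r * ρ + μ) ∧ 0 ≤ (ρ - ρ₁) * (ρ * ρ₁ + μ)) ∨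
      ((r - ρ) * (r * ρ + μ) ≤ 0 ∧ (ρ - ρ₁) * (ρ * ρ₁ + μ) ≤ 0) := by
    have hsq : 0 ≤ (ρ - ρ₁) * (ρ * ρ₁ - ρ₁ ^ 2) := by
      nlinarith [mul_nonneg hρ₁.le (sq_nonneg (ρ - ρ₁))]
    rcases mem_uIcc.1 hρ with ⟨h₁, h₂⟩ | ⟨h₁, h₂⟩ <;> rcases hμ with hμ | hμ
    · right; constructor <;> nlinarith
    · have : r * ρ ≤ ρ₁ ^ 2 := by nlinarith
      left; subst hμ; constructor <;> nlinarith
    · left; constructor <;> nlinarith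
    · have : ρ₁ ^ 2 ≤ r * ρ := by nlinarith
      left; subst hμ; constructor <;> nlinarith
  rcases key with ⟨k₁, k₂⟩ | ⟨k₁, k₂⟩
  · have := div_nonneg k₁ hrρ.le
    have := div_nonneg k₂ hρρ₁.le
    exact mem_uIcc.2 (Or.inl ⟨by linarith, by linarith⟩)
  · have := div_nonpos_of_nonpos_of_nonneg k₁ hrρ.le
    have := div_nonpos_of_nonpos_of_nonneg k₂ hρρ₁.le
    exact mem_uIcc.2 (Or.inr ⟨by linarith, by linarith⟩)

lemma add_mul_sub_mem_uIcc {a b t : ℝ} (ht : t ∈ Icc (0 : ℝ) 1) : a + t * (b - a) ∈ uIcc a b := by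
  rcases le_total a b with h | h
  · exact mem_uIcc_of_le (by nlinarith [ht.1]) (by nlinarith [ht.2])
  · exact mem_uIcc_of_ge (by nlinarith [ht.2]) (by nlinarith [ht.1])

lemma exists_real_endpoint {μ : ℝ} (hμ : μ ∈ Ioo (-1 / 4 : ℝ) 2) (hμ0 : μ ≠ 0) :
    ∃ ρ : ℝ, 0 < ρ ∧ ρ ≤ 1 ∧ |μ / ρ - ρ| ≤ 1 ∧ (0 < μ ∨ μ = -ρ ^ 2) := by
  rcases lt_or_gt_of_ne hμ0 with hneg | hpos
  · have hsq := Real.sq_sqrt (by linarith : (0 : ℝ) ≤ -μ)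
    have hpos : 0 < √(-μ) := Real.sqrt_pos.2 (by linarith)
    have hhalf : √(-μ) ≤ 1 / 2 := Real.sqrt_le_iff.2 ⟨by norm_num, by linarith [hμ.1]⟩
    refine ⟨√(-μ), hpos, by linarith, ?_, Or.inr (by linarith)⟩
    rw [show μ / √(-μ) - √(-μ) = -(2 * √(-μ)) by field_simp; linarith, abs_neg,
      abs_of_pos (by positivity)]
    linarith
  · exact ⟨1, one_pos, le_rfl, by rw [div_one, abs_le]; constructor <;> linarith [hμ.2],
      Or.inl hpos⟩

/-- With `η₂ = x` real, slide `η₂` from `x` to `± ρ₁` along the real axis. -/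
lemma exists_joinedIn_real_of_im_cos_snd_eq_zero {μ : ℝ} (hμ : μ ∈ Ioo (-1 / 4 : ℝ) 2)
    (hμ0 : μ ≠ 0) {ζ : ℂ × ℂ} (hζ : ζ ∈ zetaLevel μ) (him : (Complex.cos ζ.2).im = 0) :
    ∃ ζ', JoinedIn (zetaLevel μ ∩ imBelow ζ) ζ ζ' ∧ ζ'.1.im = 0 ∧ ζ'.2.im = 0 := by
  obtain ⟨ρ₁, hρ₁, hρ₁1, hg₁, hμρ₁⟩ := exists_real_endpoint hμ hμ0
  set x := (Complex.cos ζ.2).re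
  have hx : Complex.cos ζ.2 = x := Complex.ext rfl (by simpa using him)
  have hx0 : 0 < |x| := abs_pos.2 fun h => cos_snd_ne_zero hμ0 hζ (by rw [hx, h]; simp)
  obtain ⟨d, hd, hxd⟩ : ∃ d : ℝ, |d| = 1 ∧ x = d * |x| := by
    rcases le_total 0 x with h | h
    · exact ⟨1, by norm_num, by rw [abs_of_nonneg h, one_mul]⟩
    · exact ⟨-1, by norm_num, by rw [abs_of_nonpos h]; ring⟩
  have hd2 : d ^ 2 = 1 := by rw [← sq_abs, hd, one_pow]
  set ρ : ℝ → ℝ := fun t => |x| + t * (ρ₁ - |x|)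
  have hρ0 : ∀ t ∈ Icc (0 : ℝ) 1, ρ t ≠ 0 := fun t ht => by
    rcases mem_uIcc.1 (add_mul_sub_mem_uIcc (a := |x|) (b := ρ₁) ht) with h | h <;>
      linarith [h.1]
  have hcρ : ContinuousOn ρ (Icc 0 1) := by fun_prop
  obtain ⟨ζ', hj, h₁, h₂⟩ := exists_joinedIn_of_cos_paths hμ0
    (η₁ := fun t => ↑(d * (μ / ρ t - ρ t))) (η₂ := fun t => ↑(d * ρ t))
    (Complex.continuous_ofReal.comp_continuousOn
      (continuousOn_const.mul ((continuousOn_const.div hcρ hρ0).sub hcρ)))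
    (Complex.continuous_ofReal.comp_continuousOn (continuousOn_const.mul hcρ))
    (Or.inl fun t _ => by simp) (Or.inl fun t _ => by simp)
    (fun t ht => by
      have : d * ρ t * (d * (μ / ρ t - ρ t) + d * ρ t) = μ := by
        field_simp [hρ0 t ht]
        linear_combination μ * hd2
      exact_mod_cast this)
    (fun t ht => by
      rw [semiMajor_ofReal_mul hd, semiMajor_ofReal_mul hd, show ρ 0 = |x| by simp [ρ]]
      exact semiMajor_le_of_mem_uIcc
        (div_sub_self_mem_uIcc hx0 hρ₁ (add_mul_sub_mem_uIcc ht) hμρ₁) hg₁)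
    (fun t ht => by
      rw [semiMajor_ofReal_mul hd, semiMajor_ofReal_mul hd, show ρ 0 = |x| by simp [ρ]]
      exact semiMajor_le_of_mem_uIcc (add_mul_sub_mem_uIcc ht) (abs_le.2 ⟨by linarith, hρ₁1⟩))
    hζ (by simp [ρ, hx, ← hxd])
  refine ⟨ζ', hj, im_eq_zero_of_cos_eq_ofReal h₁ ?_, im_eq_zero_of_cos_eq_ofReal h₂ ?_⟩
  · simpa [ρ, abs_mul, hd] using hg₁
  · simpa [ρ, abs_mul, hd, abs_le] using ⟨by linarith, hρ₁1⟩

lemma exists_joinedIn_zetaLevel_real {μ : ℝ} (hμ : μ ∈ Ioo (-1 / 4 : ℝ) 2) (hμ0 : μ ≠ 0)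
    {ζ : ℂ × ℂ} (hζ : ζ ∈ zetaLevel μ) :
    ∃ ζ', JoinedIn (zetaLevel μ ∩ imBelow ζ) ζ ζ' ∧ ζ'.1.im = 0 ∧ ζ'.2.im = 0 := by
  obtain ⟨ζ₁, h₁, him⟩ := exists_joinedIn_im_cos_snd_eq_zero hμ.1 hμ0 hζ
  obtain ⟨ζ₂, h₂, hre⟩ := exists_joinedIn_real_of_im_cos_snd_eq_zero hμ hμ0 h₁.target_mem.1 him
  exact ⟨ζ₂, h₁.trans (h₂.mono (inter_subset_inter_right _ (imBelow_subset h₁.target_mem.2))), hre⟩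

/-! ### Back to `z = (ζ₁ + ζ₂, ζ₁ - ζ₂)` -/

/-- The paper's `μ = ((3/2)(3λ² - 1) + 1)/2`. -/
def hexMu (lam : ℝ) : ℝ := (9 * lam ^ 2 - 1) / 4

def toZeta (z : ℂ × ℂ) : ℂ × ℂ := ((z.1 + z.2) / 2, (z.1 - z.2) / 2)

def fromZeta (ζ : ℂ × ℂ) : ℂ × ℂ := (ζ.1 + ζ.2, ζ.1 - ζ.2)

lemma fromZeta_toZeta (z : ℂ × ℂ) : fromZeta (toZeta z) = z := by
  ext <;> simp only [fromZeta, toZeta] <;> ring_nf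

lemma toZeta_fromZeta (ζ : ℂ × ℂ) : toZeta (fromZeta ζ) = ζ := by
  ext <;> simp only [fromZeta, toZeta] <;> ring_nf

lemma continuous_fromZeta : Continuous fromZeta := by
  unfold fromZeta; fun_prop

lemma mem_hexFermiC_iff {lam : ℝ} {z : ℂ × ℂ} :
    z ∈ hexFermiC lam ↔ toZeta z ∈ zetaLevel (hexMu lam) := by
  rw [← fromZeta_toZeta z, toZeta_fromZeta]
  simp only [hexFermiC, zetaLevel, mem_ofPred_eq, fromZeta, hexMu]
  rw [show (toZeta z).1 + (toZeta z).2 - ((toZeta z).1 - (toZeta z).2) = 2 * (toZeta z).2 by ring,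
    Complex.cos_add, Complex.cos_sub, Complex.cos_two_mul]
  push_cast
  constructor <;> intro h
  · linear_combination h / 2
  · linear_combination 2 * h

/-- `h₁` and `h₂` say that `w` is a critical point of `cos ζ₂ (cos ζ₁ + cos ζ₂)`. -/
lemma eq_critical_value {μ : ℝ} {w : ℂ × ℂ} (hw : w ∈ zetaLevel μ)
    (h₁ : Complex.sin w.1 * Complex.cos w.2 = 0)
    (h₂ : Complex.sin w.2 * (Complex.cos w.1 + 2 * Complex.cos w.2) = 0) :
    μ = 0 ∨ μ = 2 ∨ μ = -1 / 4 := by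
  have hw' : Complex.cos w.2 * (Complex.cos w.1 + Complex.cos w.2) = μ := hw
  rcases mul_eq_zero.1 h₁ with hs₁ | hc₂
  · have ha : Complex.cos w.1 ^ 2 = 1 := by
      linear_combination Complex.sin_sq_add_cos_sq w.1 - Complex.sin w.1 * hs₁
    rcases mul_eq_zero.1 h₂ with hs₂ | hsum
    · have hb : Complex.cos w.2 ^ 2 = 1 := by
        linear_combination Complex.sin_sq_add_cos_sq w.2 - Complex.sin w.2 * hs₂
      have : (Complex.cos w.1 * Complex.cos w.2 - 1) * (Complex.cos w.1 * Complex.cos w.2 + 1)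
          = 0 := by linear_combination Complex.cos w.2 ^ 2 * ha + hb
      rcases mul_eq_zero.1 this with h | h
      · right; left
        exact_mod_cast (show (μ : ℂ) = 2 by linear_combination -hw' + h + hb)
      · left
        exact_mod_cast (show (μ : ℂ) = 0 by linear_combination -hw' + h + hb)
    · right; right
      exact_mod_cast (show (μ : ℂ) = -1 / 4 by
        linear_combination -hw' + (Complex.cos w.1 + 2 * Complex.cos w.2) / 4 * hsum - ha / 4)
  · left
    exact_mod_cast (show (μ : ℂ) = 0 by rw [← hw', hc₂, zero_mul])

lemma fromZeta_mem_hexFermiReg {lam : ℝ} (hμ : hexMu lam ∈ Ioo (-1 / 4 : ℝ) 2)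
    (hμ0 : hexMu lam ≠ 0) {w : ℂ × ℂ} (hw : w ∈ zetaLevel (hexMu lam)) :
    fromZeta w ∈ hexFermiReg lam := by
  refine ⟨mem_hexFermiC_iff.2 (by rwa [toZeta_fromZeta]), ?_⟩
  by_contra! h
  simp only [fromZeta, show w.1 + w.2 - (w.1 - w.2) = 2 * w.2 by ring, Complex.sin_add,
    Complex.sin_sub, Complex.sin_two_mul] at h
  rcases eq_critical_value hw (by linear_combination (h.1 + h.2) / 2)
    (by linear_combination (h.1 - h.2) / 2) with h | h | h
  · exact hμ0 h
  · exact hμ.2.ne h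
  · exact hμ.1.ne' h

lemma fromZeta_mem_hexStrip {a : ℝ} {ζ w : ℂ × ℂ} (hζ : fromZeta ζ ∈ hexStrip a)
    (hw : w ∈ imBelow ζ) : fromZeta w ∈ hexStrip a := by
  simp only [hexStrip, fromZeta, mem_ofPred_eq, Complex.add_im, Complex.sub_im] at hζ ⊢
  nlinarith [sq_le_sq.2 hw.1, sq_le_sq.2 hw.2]

lemma exists_joinedIn_real_of_sq_ne {lam a : ℝ} (hlam : lam ∈ Ioo (-1 : ℝ) 1) (hlam0 : lam ≠ 0)
    (h19 : lam ^ 2 ≠ 1 / 9) {z₀ : ℂ × ℂ} (hz : z₀ ∈ hexFermiC lam) (hza : z₀ ∈ hexStrip a) :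
    ∃ z : ℂ × ℂ, JoinedIn (hexFermiReg lam ∩ hexStrip a) z₀ z ∧ z.1.im = 0 ∧ z.2.im = 0 := by
  have hl : 0 < lam ^ 2 := by positivity
  have hl' : lam ^ 2 < 1 := by nlinarith [hlam.1, hlam.2]
  have hμ : hexMu lam ∈ Ioo (-1 / 4 : ℝ) 2 := by constructor <;> unfold hexMu <;> linarith
  have hμ0 : hexMu lam ≠ 0 := fun h => h19 (by unfold hexMu at h; linarith)
  obtain ⟨ζ, hj, h₁, h₂⟩ := exists_joinedIn_zetaLevel_real hμ hμ0 (mem_hexFermiC_iff.1 hz)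
  refine ⟨fromZeta ζ, ?_, by simp [fromZeta, h₁, h₂], by simp [fromZeta, h₁, h₂]⟩
  rw [← fromZeta_toZeta z₀]
  refine (hj.map continuous_fromZeta).mono ?_
  rintro _ ⟨w, ⟨hw, hwb⟩, rfl⟩
  exact ⟨fromZeta_mem_hexFermiReg hμ hμ0 hw,
    fromZeta_mem_hexStrip (by rwa [fromZeta_toZeta]) hwb⟩

/-! ### The case `λ² = 1/9` -/

lemma mem_hexFermiC_iff_of_sq_eq {lam : ℝ} (h : lam ^ 2 = 1 / 9) {z : ℂ × ℂ} :
    z ∈ hexFermiC lam ↔ Complex.cos (z.1 / 2) = 0 ∨ Complex.cos (z.2 / 2) = 0 ∨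
      Complex.cos ((z.1 - z.2) / 2) = 0 := by
  have hμ : hexMu lam = 0 := by unfold hexMu; rw [h]; norm_num
  rw [mem_hexFermiC_iff, hμ]
  simp only [zetaLevel, toZeta, mem_ofPred_eq, Complex.ofReal_zero]
  rw [Complex.cos_add_cos, show ((z.1 + z.2) / 2 + (z.1 - z.2) / 2) / 2 = z.1 / 2 by ring,
    show ((z.1 + z.2) / 2 - (z.1 - z.2) / 2) / 2 = z.2 / 2 by ring]
  simp only [mul_eq_zero, two_ne_zero, false_or]
  tauto

lemma im_eq_zero_of_cos_half_eq_zero {w : ℂ} (h : Complex.cos (w / 2) = 0) : w.im = 0 := by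
  obtain ⟨k, hk⟩ := Complex.cos_eq_zero_iff.1 h
  rw [show w = ((2 * k + 1) * Real.pi : ℝ) by push_cast; linear_combination 2 * hk]
  exact Complex.ofReal_im _

lemma sin_eq_zero_of_cos_half_eq_zero {w : ℂ} (h : Complex.cos (w / 2) = 0) :
    Complex.sin w = 0 := by
  rw [show w = 2 * (w / 2) by ring, Complex.sin_two_mul, h, mul_zero]

lemma cos_eq_neg_one_of_cos_half_eq_zero {w : ℂ} (h : Complex.cos (w / 2) = 0) :
    Complex.cos w = -1 := by
  rw [show w = 2 * (w / 2) by ring, Complex.cos_two_mul, h]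
  ring

lemma sin_ne_zero_of_im_ne_zero {u : ℂ} (h : u.im ≠ 0) : Complex.sin u ≠ 0 := by
  rw [Ne, Complex.sin_eq_zero_iff]
  rintro ⟨k, rfl⟩
  simp at h

/-- Shrink the imaginary part of `u₀` to `0`, shifting the real part to where `sin ≠ 0`. -/
lemma exists_joinedIn_real_sin_ne_zero {u₀ : ℂ} (h : u₀.im ≠ 0) :
    ∃ x : ℝ, JoinedIn {u : ℂ | Complex.sin u ≠ 0 ∧ |u.im| ≤ |u₀.im|} u₀ x := by
  obtain ⟨δ, hδ⟩ : ∃ δ : ℝ, Real.sin (u₀.re + δ) ≠ 0 := by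
    by_cases h0 : Real.sin u₀.re = 0
    · refine ⟨Real.pi / 2, fun hc => ?_⟩
      have := Real.sin_sq_add_cos_sq u₀.re
      rw [Real.sin_add_pi_div_two] at hc
      rw [h0, hc] at this
      norm_num at this
    · exact ⟨0, by rwa [add_zero]⟩
  refine ⟨u₀.re + δ, JoinedIn.ofLine
    (f := fun t : ℝ => ↑(u₀.re + t * δ) + ↑((1 - t) * u₀.im) * Complex.I) (by fun_prop)
    (by simp) (by simp) ?_⟩
  rintro _ ⟨t, ht, rfl⟩
  refine ⟨?_, ?_⟩
  · rcases ht.2.lt_or_eq with ht1 | rfl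
    · apply sin_ne_zero_of_im_ne_zero
      simpa using mul_ne_zero (sub_ne_zero.2 ht1.ne') h
    · show Complex.sin (↑(u₀.re + 1 * δ) + ↑((1 - 1) * u₀.im) * Complex.I) ≠ 0
      rw [show (↑(u₀.re + 1 * δ) + ↑((1 - 1) * u₀.im) * Complex.I : ℂ) = ↑(u₀.re + δ) by simp,
        ← Complex.ofReal_sin]
      exact_mod_cast hδ
  · simp only [Complex.add_im, Complex.ofReal_im, Complex.mul_im, Complex.ofReal_re,
      Complex.I_re, Complex.I_im, mul_zero, mul_one, zero_add, add_zero, abs_mul]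
    rw [abs_of_nonneg (sub_nonneg.2 ht.2)]
    nlinarith [abs_nonneg u₀.im, ht.1]

lemma exists_joinedIn_real_of_line {S : Set (ℂ × ℂ)} {g : ℂ → ℂ × ℂ} (hg : Continuous g)
    {u₀ : ℂ} (hu₀ : u₀.im ≠ 0) (hS : ∀ u, Complex.sin u ≠ 0 → |u.im| ≤ |u₀.im| → g u ∈ S)
    (hreal : ∀ x : ℝ, (g x).1.im = 0 ∧ (g x).2.im = 0) :
    ∃ z : ℂ × ℂ, JoinedIn S (g u₀) z ∧ z.1.im = 0 ∧ z.2.im = 0 := by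
  obtain ⟨x, hx⟩ := exists_joinedIn_real_sin_ne_zero hu₀
  refine ⟨g x, (hx.map hg).mono ?_, hreal x⟩
  rintro _ ⟨u, ⟨hu, hle⟩, rfl⟩
  exact hS u hu hle

section SqEq

variable {lam a : ℝ} {z₀ : ℂ × ℂ}

lemma exists_joinedIn_real_of_cos_half_fst_eq_zero (h19 : lam ^ 2 = 1 / 9)
    (h : Complex.cos (z₀.1 / 2) = 0) (hza : z₀ ∈ hexStrip a) (him : z₀.2.im ≠ 0) :
    ∃ z : ℂ × ℂ, JoinedIn (hexFermiReg lam ∩ hexStrip a) z₀ z ∧ z.1.im = 0 ∧ z.2.im = 0 := by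
  have him₁ := im_eq_zero_of_cos_half_eq_zero h
  have hza' : z₀.1.im ^ 2 + z₀.2.im ^ 2 < a ^ 2 := hza
  refine exists_joinedIn_real_of_line (g := fun u => (z₀.1, u)) (by fun_prop) him
    (fun u hu hle => ⟨⟨(mem_hexFermiC_iff_of_sq_eq h19).2 (Or.inl h), Or.inl ?_⟩, ?_⟩)
    fun x => ⟨him₁, by simp⟩
  · simpa [Complex.sin_sub, sin_eq_zero_of_cos_half_eq_zero h,
      cos_eq_neg_one_of_cos_half_eq_zero h] using hu
  · show z₀.1.im ^ 2 + u.im ^ 2 < a ^ 2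
    nlinarith [sq_le_sq.2 hle]

lemma exists_joinedIn_real_of_cos_half_snd_eq_zero (h19 : lam ^ 2 = 1 / 9)
    (h : Complex.cos (z₀.2 / 2) = 0) (hza : z₀ ∈ hexStrip a) (him : z₀.1.im ≠ 0) :
    ∃ z : ℂ × ℂ, JoinedIn (hexFermiReg lam ∩ hexStrip a) z₀ z ∧ z.1.im = 0 ∧ z.2.im = 0 := by
  have him₂ := im_eq_zero_of_cos_half_eq_zero h
  have hza' : z₀.1.im ^ 2 + z₀.2.im ^ 2 < a ^ 2 := hza
  refine exists_joinedIn_real_of_line (g := fun u => (u, z₀.2)) (by fun_prop) him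
    (fun u hu hle => ⟨⟨(mem_hexFermiC_iff_of_sq_eq h19).2 (Or.inr (Or.inl h)), Or.inr ?_⟩, ?_⟩)
    fun x => ⟨by simp, him₂⟩
  · simpa [Complex.sin_sub, sin_eq_zero_of_cos_half_eq_zero h,
      cos_eq_neg_one_of_cos_half_eq_zero h] using hu
  · show u.im ^ 2 + z₀.2.im ^ 2 < a ^ 2
    nlinarith [sq_le_sq.2 hle]

lemma exists_joinedIn_real_of_cos_half_sub_eq_zero (h19 : lam ^ 2 = 1 / 9)
    (h : Complex.cos ((z₀.1 - z₀.2) / 2) = 0) (hza : z₀ ∈ hexStrip a) (him : z₀.1.im ≠ 0) :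
    ∃ z : ℂ × ℂ, JoinedIn (hexFermiReg lam ∩ hexStrip a) z₀ z ∧ z.1.im = 0 ∧ z.2.im = 0 := by
  have him₁₂ := im_eq_zero_of_cos_half_eq_zero h
  have hza' : 2 * z₀.1.im ^ 2 < a ^ 2 := by
    have : z₀.1.im ^ 2 + z₀.2.im ^ 2 < a ^ 2 := hza
    rw [Complex.sub_im, sub_eq_zero] at him₁₂
    rwa [← him₁₂, ← two_mul] at this
  obtain ⟨z, hj, hre⟩ := exists_joinedIn_real_of_line (S := hexFermiReg lam ∩ hexStrip a)
    (g := fun u => (u, u - (z₀.1 - z₀.2))) (by fun_prop) him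
    (fun u hu hle => by
      have hd : u - (u - (z₀.1 - z₀.2)) = z₀.1 - z₀.2 := by ring
      refine ⟨⟨(mem_hexFermiC_iff_of_sq_eq h19).2 (Or.inr (Or.inr (by rw [hd]; exact h))),
        Or.inl ?_⟩, ?_⟩
      · rwa [hd, sin_eq_zero_of_cos_half_eq_zero h, add_zero]
      · show u.im ^ 2 + (u - (z₀.1 - z₀.2)).im ^ 2 < a ^ 2
        rw [Complex.sub_im u, him₁₂, sub_zero]
        nlinarith [sq_le_sq.2 hle])
    fun x => ⟨by simp, by simp [him₁₂]⟩
  refine ⟨z, ?_, hre⟩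
  convert hj using 1
  ext <;> simp

lemma exists_joinedIn_real_of_sq_eq (h19 : lam ^ 2 = 1 / 9)
    (hz₀ : z₀ ∈ hexFermiReg lam ∩ hexStrip a) :
    ∃ z : ℂ × ℂ, JoinedIn (hexFermiReg lam ∩ hexStrip a) z₀ z ∧ z.1.im = 0 ∧ z.2.im = 0 := by
  by_cases hreal : z₀.1.im = 0 ∧ z₀.2.im = 0
  · exact ⟨z₀, JoinedIn.refl hz₀, hreal⟩
  rcases (mem_hexFermiC_iff_of_sq_eq h19).1 hz₀.1.1 with h | h | h
  · exact exists_joinedIn_real_of_cos_half_fst_eq_zero h19 h hz₀.2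
      fun h' => hreal ⟨im_eq_zero_of_cos_half_eq_zero h, h'⟩
  · exact exists_joinedIn_real_of_cos_half_snd_eq_zero h19 h hz₀.2
      fun h' => hreal ⟨h', im_eq_zero_of_cos_half_eq_zero h⟩
  · refine exists_joinedIn_real_of_cos_half_sub_eq_zero h19 h hz₀.2 fun h' => hreal ⟨h', ?_⟩
    have := im_eq_zero_of_cos_half_eq_zero h
    rw [Complex.sub_im] at this
    linarith

end SqEq

lemma JoinedIn.exists_continuousOn_Icc {X : Type*} [TopologicalSpace X] {F : Set X} {x y : X}
    (h : JoinedIn F x y) : ∃ c : ℝ → X, ContinuousOn c (Icc 0 1) ∧ c 0 = x ∧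
      (∀ t ∈ Icc (0 : ℝ) 1, c t ∈ F) ∧ c 1 = y := by
  obtain ⟨γ, hγ⟩ := h
  refine ⟨γ.extend, γ.continuous_extend.continuousOn, γ.extend_zero, fun t ht => ?_,
    γ.extend_one⟩
  rw [γ.extend_apply ht]
  exact hγ _

end

theorem stmt_15_general (lam : ℝ) (hlam : lam ∈ Set.Ioo (-1 : ℝ) 1) (hlam0 : lam ≠ 0)
    (a : ℝ) :
    ∀ z₀ ∈ hexFermiReg lam ∩ hexStrip a,
      ∃ c : ℝ → ℂ × ℂ, ContinuousOn c (Set.Icc 0 1) ∧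
        c 0 = z₀ ∧
        (∀ t ∈ Set.Icc (0 : ℝ) 1, c t ∈ hexFermiReg lam ∩ hexStrip a) ∧
        (c 1).1.im = 0 ∧ (c 1).2.im = 0 := by
  intro z₀ hz₀
  obtain ⟨z, hjoin, hz₁, hz₂⟩ : ∃ z : ℂ × ℂ,
      JoinedIn (hexFermiReg lam ∩ hexStrip a) z₀ z ∧ z.1.im = 0 ∧ z.2.im = 0 := by
    by_cases h19 : lam ^ 2 = 1 / 9
    · exact exists_joinedIn_real_of_sq_eq h19 hz₀
    · exact exists_joinedIn_real_of_sq_ne hlam hlam0 h19 hz₀.1.1 hz₀.2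
  obtain ⟨c, hc, hc₀, hcF, hc₁⟩ := hjoin.exists_continuousOn_Icc
  exact ⟨c, hc, hc₀, hcF, hc₁ ▸ hz₁, hc₁ ▸ hz₂⟩

/-- For the hexagonal lattice and `λ ∈ (−1,1) \ {0}`, every point of
`M^ℂ_{λ,reg} ∩ Ω_a` can be joined by a continuous path inside `M^ℂ_{λ,reg} ∩ Ω_a` to a
point of `M^ℂ_{λ,reg} ∩ 𝕋²` (a real point of the regular Fermi surface). -/
theorem stmt_15 (lam : ℝ) (hlam : lam ∈ Set.Ioo (-1 : ℝ) 1) (hlam0 : lam ≠ 0)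
    (a : ℝ) (ha : 0 < a) :
    ∀ z₀ ∈ hexFermiReg lam ∩ hexStrip a,
      ∃ c : ℝ → ℂ × ℂ, ContinuousOn c (Set.Icc 0 1) ∧
        c 0 = z₀ ∧
        (∀ t ∈ Set.Icc (0 : ℝ) 1, c t ∈ hexFermiReg lam ∩ hexStrip a) ∧
        (c 1).1.im = 0 ∧ (c 1).2.im = 0 :=
  stmt_15_general lam hlam hlam0 a
end

section
/- Let S be a finite nonempty subset of the d-dimensional square shaped graph with interior vertices Ṽ° = {x ∈ ℤ^d : |x_j| ≤ R, j=1,…,d} and boundary vertices ∂Ṽ = {x ∈ ℤ^d∖Ṽ° : ∃y ∈ Ṽ° with |x−y|=1}, with #S ≥ 2. Then every x ∈ S with x₁ = max{y₁ : y ∈ S} is an extreme point of S with respect to ∂Ṽ, every x ∈ S with x₁ = min{y₁ : y ∈ S} is an extreme point, and hence S has at least two extreme points (the two-points condition holds). -/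
open Finset

/-- Adjacency in the square lattice `ℤ^d` (Euclidean distance 1, i.e. `ℓ¹`-distance 1). -/
def sqAdj (d : ℕ) (x y : Fin d → ℤ) : Prop := ∑ j, |x j - y j| = 1

/-- The interior vertices of the square shaped domain: `{x : |x_j| ≤ R}`. -/
def sqInt (d : ℕ) (R : ℤ) : Set (Fin d → ℤ) := {x | ∀ j, |x j| ≤ R}

/-- The boundary vertices: points outside the domain adjacent to an interior vertex. -/
def sqBdry (d : ℕ) (R : ℤ) : Set (Fin d → ℤ) :=
  {x | x ∉ sqInt d R ∧ ∃ y ∈ sqInt d R, sqAdj d x y}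

/-- The vertex set `Ṽ° ∪ ∂Ṽ`. -/
def sqVerts (d : ℕ) (R : ℤ) : Set (Fin d → ℤ) := sqInt d R ∪ sqBdry d R

/-- The square shaped graph: edges of the lattice with at least one interior end point
(no boundary-boundary edges). -/
def sqGraph (d : ℕ) (R : ℤ) : SimpleGraph ↥(sqVerts d R) where
  Adj a b := sqAdj d a.1 b.1 ∧ (a.1 ∈ sqInt d R ∨ b.1 ∈ sqInt d R)
  symm := by
    constructor
    intro a b h
    refine ⟨?_, h.2.symm⟩
    have := h.1
    simpa [sqAdj, abs_sub_comm] using this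
  loopless := by
    constructor
    intro a h
    have := h.1
    simp [sqAdj] at this

/-- `v` is an extreme point of `S ⊆ Ṽ°` with respect to `∂Ṽ`: there is a boundary vertex
`w` such that `v` is the unique nearest vertex of `S` to `w` in the graph distance. -/
def sqExtreme (d : ℕ) (R : ℤ) (S : Finset ↥(sqVerts d R)) (v : ↥(sqVerts d R)) : Prop :=
  v ∈ S ∧ ∃ w : ↥(sqVerts d R), w.1 ∈ sqBdry d R ∧
    ∀ u ∈ S, u ≠ v → (sqGraph d R).dist w v < (sqGraph d R).dist w u

/-!
A maximiser `x` of a coordinate `x_j` over `S` is the unique nearest point of `S` to the boundary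
vertex `w` obtained from `x` by moving its `j`-th coordinate to `R + 1`. Graph distances dominate
`ℓ¹` distances, and between interior vertices they coincide, since one can always step one unit
towards the target without leaving the box. Hence `dist w x = R + 1 - x_j`, while any other
`u ∈ S` is at `ℓ¹` distance at least `R + 1 - u_j ≥ R + 1 - x_j` from `w`, and equality of the
`j`-th coordinates forces an extra unit in another coordinate. Minimisers are handled in the same
way with `-(R + 1)`. If all of `S` lies in one hyperplane `x_j = c`, every point is a maximiser.
-/

lemma abs_mul_sub_eq_of_abs_le {ε s t : ℤ} (hε : ε = 1 ∨ ε = -1) (ht : |t| ≤ s) :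
    |ε * s - t| = s - ε * t := by
  have := abs_le.mp ht
  rcases hε with rfl | rfl
  · rw [one_mul, one_mul, abs_of_nonneg (by omega)]
  · rw [abs_of_nonpos (by linarith)]
    ring

def l1Dist {ι : Type*} [Fintype ι] (x y : ι → ℤ) : ℤ := ∑ j, |x j - y j|

section L1Dist

variable {ι : Type*} [Fintype ι]

lemma l1Dist_nonneg (x y : ι → ℤ) : 0 ≤ l1Dist x y :=
  Finset.sum_nonneg fun _ _ => abs_nonneg _

lemma l1Dist_eq_zero_iff {x y : ι → ℤ} : l1Dist x y = 0 ↔ x = y := by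
  simp only [l1Dist, Finset.sum_eq_zero_iff_of_nonneg (fun j _ => abs_nonneg (x j - y j)),
    Finset.mem_univ, true_implies, abs_eq_zero, sub_eq_zero, funext_iff]

lemma l1Dist_pos_of_ne {x y : ι → ℤ} (h : x ≠ y) : 0 < l1Dist x y :=
  (l1Dist_nonneg x y).lt_of_ne' (mt l1Dist_eq_zero_iff.mp h)

lemma l1Dist_triangle (x y z : ι → ℤ) : l1Dist x z ≤ l1Dist x y + l1Dist y z := by
  rw [l1Dist, l1Dist, l1Dist, ← Finset.sum_add_distrib]
  exact Finset.sum_le_sum fun j _ => abs_sub_le _ _ _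

lemma abs_sub_le_l1Dist (x y : ι → ℤ) (j : ι) : |x j - y j| ≤ l1Dist x y :=
  Finset.single_le_sum (f := fun j => |x j - y j|) (fun _ _ => abs_nonneg _) (Finset.mem_univ j)

variable [DecidableEq ι]

lemma l1Dist_update_update (x : ι → ℤ) (j : ι) (s t : ℤ) :
    l1Dist (Function.update x j s) (Function.update x j t) = |s - t| := by
  rw [l1Dist, Finset.sum_eq_single j (fun i _ hij => by simp [Function.update_of_ne hij])
    (by simp)]
  simp

lemma l1Dist_update_add (x y : ι → ℤ) (j : ι) (t : ℤ) :
    l1Dist (Function.update x j t) y + |x j - y j| = l1Dist x y + |t - y j| := by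
  have hrest : ∑ i ∈ Finset.univ.erase j, |Function.update x j t i - y i|
      = ∑ i ∈ Finset.univ.erase j, |x i - y i| :=
    Finset.sum_congr rfl fun i hi => by rw [Function.update_of_ne (Finset.ne_of_mem_erase hi)]
  rw [l1Dist, l1Dist, ← Finset.add_sum_erase _ _ (Finset.mem_univ j),
    ← Finset.add_sum_erase _ _ (Finset.mem_univ j), hrest, Function.update_self]
  ring

end L1Dist

section SquareGraph

variable {d : ℕ} {R : ℤ}

lemma update_mem_sqInt {x : Fin d → ℤ} (hx : x ∈ sqInt d R) {j : Fin d} {t : ℤ} (ht : |t| ≤ R) :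
    Function.update x j t ∈ sqInt d R := fun i => by
  rcases eq_or_ne i j with rfl | hij
  · simpa using ht
  · simpa [Function.update_of_ne hij] using hx i

lemma update_mul_add_one_notMem_sqInt (x : Fin d → ℤ) (j : Fin d) {ε : ℤ}
    (hε : ε = 1 ∨ ε = -1) : Function.update x j (ε * (R + 1)) ∉ sqInt d R := fun h => by
  have := h j
  rcases hε with rfl | rfl <;> simp [abs_le] at this

lemma sqAdj_update_mul_add_one (x : Fin d → ℤ) (j : Fin d) {ε : ℤ} (hε : ε = 1 ∨ ε = -1) :
    sqAdj d (Function.update x j (ε * (R + 1))) (Function.update x j (ε * R)) := by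
  rw [sqAdj, ← l1Dist, l1Dist_update_update, ← mul_sub, add_sub_cancel_left, mul_one]
  rcases hε with rfl | rfl <;> rfl

lemma exists_sqAdj_l1Dist_eq_sub_one {a b : Fin d → ℤ} (ha : a ∈ sqInt d R)
    (hb : b ∈ sqInt d R) (hab : a ≠ b) :
    ∃ c ∈ sqInt d R, sqAdj d a c ∧ l1Dist c b = l1Dist a b - 1 := by
  obtain ⟨j, hj⟩ := Function.ne_iff.mp hab
  set s := Int.sign (b j - a j)
  have hs : |s| = 1 ∧ |a j + s - b j| = |a j - b j| - 1 ∧ |a j + s| ≤ R := by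
    have := abs_le.mp (ha j)
    have := abs_le.mp (hb j)
    rcases lt_or_gt_of_ne hj with hlt | hlt
    · rw [show s = 1 from Int.sign_eq_one_of_pos (by omega)]
      refine ⟨abs_one, ?_, abs_le.mpr ⟨by omega, by omega⟩⟩
      rw [abs_of_nonpos (by omega), abs_of_neg (by omega)]
      ring
    · rw [show s = -1 from Int.sign_eq_neg_one_of_neg (by omega)]
      refine ⟨by simp, ?_, abs_le.mpr ⟨by omega, by omega⟩⟩
      rw [abs_of_nonneg (by omega), abs_of_pos (by omega)]
      ring
  refine ⟨Function.update a j (a j + s), update_mem_sqInt ha hs.2.2, ?_, ?_⟩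
  · have := l1Dist_update_update a j (a j) (a j + s)
    rw [Function.update_eq_self] at this
    rw [sqAdj, ← l1Dist, this, sub_add_cancel_left, abs_neg, hs.1]
  · linarith [l1Dist_update_add a b j (a j + s), hs.2.1]

lemma l1Dist_le_length {a b : ↥(sqVerts d R)} (p : (sqGraph d R).Walk a b) :
    l1Dist a.1 b.1 ≤ p.length := by
  induction p with
  | nil => simp [l1Dist]
  | @cons u v w h p ih =>
    have := l1Dist_triangle u.1 v.1 w.1
    rw [SimpleGraph.Walk.length_cons, Nat.cast_add, Nat.cast_one]
    linarith [show l1Dist _ _ = 1 from h.1]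

lemma l1Dist_le_dist {a b : ↥(sqVerts d R)} (h : (sqGraph d R).Reachable a b) :
    l1Dist a.1 b.1 ≤ (sqGraph d R).dist a b := by
  obtain ⟨p, hp⟩ := h.exists_walk_length_eq_dist
  exact hp ▸ l1Dist_le_length p

lemma exists_walk_length_eq_l1Dist {a b : ↥(sqVerts d R)} (ha : a.1 ∈ sqInt d R)
    (hb : b.1 ∈ sqInt d R) : ∃ p : (sqGraph d R).Walk a b, (p.length : ℤ) = l1Dist a.1 b.1 := by
  suffices ∀ n : ℕ, ∀ a b : ↥(sqVerts d R), a.1 ∈ sqInt d R → b.1 ∈ sqInt d R →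
      l1Dist a.1 b.1 = n → ∃ p : (sqGraph d R).Walk a b, p.length = n by
    obtain ⟨p, hp⟩ := this _ a b ha hb (Int.toNat_of_nonneg (l1Dist_nonneg a.1 b.1)).symm
    exact ⟨p, by rw [hp, Int.toNat_of_nonneg (l1Dist_nonneg a.1 b.1)]⟩
  intro n
  induction n with
  | zero =>
    intro a b _ _ h
    obtain rfl : a = b := Subtype.ext (l1Dist_eq_zero_iff.mp h)
    exact ⟨.nil, rfl⟩
  | succ n ih =>
    intro a b ha hb h
    obtain ⟨c, hc, hac, hcb⟩ := exists_sqAdj_l1Dist_eq_sub_one ha hb fun hab => by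
      have := l1Dist_eq_zero_iff.mpr hab; omega
    obtain ⟨p, hp⟩ := ih ⟨c, Or.inl hc⟩ b hc hb (show l1Dist c b.1 = n by omega)
    exact ⟨.cons (show (sqGraph d R).Adj a ⟨c, Or.inl hc⟩ from ⟨hac, Or.inl ha⟩) p, by simp [hp]⟩

lemma exists_walk_length_eq_l1Dist_add_one {a b : ↥(sqVerts d R)} {c : Fin d → ℤ}
    (hc : c ∈ sqInt d R) (hac : sqAdj d a.1 c) (hb : b.1 ∈ sqInt d R) :
    ∃ p : (sqGraph d R).Walk a b, (p.length : ℤ) = l1Dist c b.1 + 1 := by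
  obtain ⟨q, hq⟩ := exists_walk_length_eq_l1Dist (a := ⟨c, Or.inl hc⟩) hc hb
  exact ⟨.cons (show (sqGraph d R).Adj a ⟨c, Or.inl hc⟩ from ⟨hac, Or.inr hc⟩) q, by simp [hq]⟩

lemma update_mul_mem_sqInt {x : Fin d → ℤ} (hx : x ∈ sqInt d R) (j : Fin d) {ε : ℤ}
    (hε : ε = 1 ∨ ε = -1) : Function.update x j (ε * R) ∈ sqInt d R := by
  have hR : 0 ≤ R := (abs_nonneg _).trans (hx j)
  exact update_mem_sqInt hx (by rcases hε with rfl | rfl <;> simp [abs_of_nonneg hR])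

variable {w x u : ↥(sqVerts d R)} {j : Fin d} {ε : ℤ}

lemma dist_le_of_val_eq_update (hε : ε = 1 ∨ ε = -1) (hx : x.1 ∈ sqInt d R)
    (hw : w.1 = Function.update x.1 j (ε * (R + 1))) :
    ((sqGraph d R).dist w x : ℤ) ≤ R + 1 - ε * x.1 j := by
  obtain ⟨p, hp⟩ := exists_walk_length_eq_l1Dist_add_one (a := w)
    (update_mul_mem_sqInt hx j hε) (hw ▸ sqAdj_update_mul_add_one x.1 j hε) hx
  have hyx := l1Dist_update_add x.1 x.1 j (ε * R)
  rw [sub_self, abs_zero, l1Dist_eq_zero_iff.mpr rfl, abs_mul_sub_eq_of_abs_le hε (hx j)] at hyx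
  have : ((sqGraph d R).dist w x : ℤ) ≤ p.length := by exact_mod_cast SimpleGraph.dist_le p
  omega

lemma le_dist_of_val_eq_update (hε : ε = 1 ∨ ε = -1) (hx : x.1 ∈ sqInt d R)
    (hu : u.1 ∈ sqInt d R) (hw : w.1 = Function.update x.1 j (ε * (R + 1))) :
    R + 1 - ε * u.1 j + (l1Dist x.1 u.1 - |x.1 j - u.1 j|) ≤ (sqGraph d R).dist w u := by
  obtain ⟨p, -⟩ := exists_walk_length_eq_l1Dist_add_one (a := w)
    (update_mul_mem_sqInt hx j hε) (hw ▸ sqAdj_update_mul_add_one x.1 j hε) hu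
  have hwu := l1Dist_update_add x.1 u.1 j (ε * (R + 1))
  rw [← hw, abs_mul_sub_eq_of_abs_le hε ((hu j).trans (by linarith [abs_nonneg R]))] at hwu
  linarith [l1Dist_le_dist p.reachable]

lemma sqExtreme_of_forall_mul_le {S : Finset ↥(sqVerts d R)} (hSint : ∀ v ∈ S, v.1 ∈ sqInt d R)
    (hε : ε = 1 ∨ ε = -1) (hx : x ∈ S) (hopt : ∀ y ∈ S, ε * y.1 j ≤ ε * x.1 j) :
    sqExtreme d R S x := by
  have hxint := hSint x hx
  have hwbd : Function.update x.1 j (ε * (R + 1)) ∈ sqBdry d R :=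
    ⟨update_mul_add_one_notMem_sqInt x.1 j hε, _, update_mul_mem_sqInt hxint j hε,
      sqAdj_update_mul_add_one x.1 j hε⟩
  refine ⟨hx, ⟨_, Or.inr hwbd⟩, hwbd, fun u hu hux => ?_⟩
  have hupper := dist_le_of_val_eq_update (w := ⟨_, Or.inr hwbd⟩) hε hxint rfl
  have hlower := le_dist_of_val_eq_update (w := ⟨_, Or.inr hwbd⟩) hε hxint (hSint u hu) rfl
  have := abs_sub_le_l1Dist x.1 u.1 j
  suffices ε * u.1 j < ε * x.1 j ∨ (u.1 j = x.1 j ∧ 0 < l1Dist x.1 u.1) by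
    rw [← Nat.cast_lt (α := ℤ)]
    rcases this with h | ⟨h, h'⟩
    · omega
    · rw [h, sub_self, abs_zero] at hlower
      omega
  rcases eq_or_ne (u.1 j) (x.1 j) with h | h
  · exact .inr ⟨h, l1Dist_pos_of_ne fun h' => hux (Subtype.ext h').symm⟩
  · refine .inl ((hopt u hu).lt_of_ne fun h' => h ?_)
    rcases hε with rfl | rfl <;> omega

end SquareGraph

theorem stmt_16_general (d : ℕ) [NeZero d] (R : ℤ)
    (S : Finset ↥(sqVerts d R)) (hSint : ∀ v ∈ S, v.1 ∈ sqInt d R)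
    (hcard : 2 ≤ S.card) :
    (∀ x ∈ S, (∀ y ∈ S, y.1 0 ≤ x.1 0) → sqExtreme d R S x) ∧
    (∀ x ∈ S, (∀ y ∈ S, x.1 0 ≤ y.1 0) → sqExtreme d R S x) ∧
    ∃ v ∈ S, ∃ w ∈ S, v ≠ w ∧ sqExtreme d R S v ∧ sqExtreme d R S w := by
  have hmax : ∀ x ∈ S, (∀ y ∈ S, y.1 0 ≤ x.1 0) → sqExtreme d R S x := fun x hx h =>
    sqExtreme_of_forall_mul_le (j := 0) hSint (.inl rfl) hx fun y hy => by simpa using h y hy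
  have hmin : ∀ x ∈ S, (∀ y ∈ S, x.1 0 ≤ y.1 0) → sqExtreme d R S x := fun x hx h =>
    sqExtreme_of_forall_mul_le (j := 0) hSint (.inr rfl) hx fun y hy => by simpa using h y hy
  refine ⟨hmax, hmin, ?_⟩
  have hne : S.Nonempty := Finset.card_pos.mp (by omega)
  obtain ⟨a, ha, ha_max⟩ := S.exists_max_image (fun v => v.1 0) hne
  obtain ⟨b, hb, hb_min⟩ := S.exists_min_image (fun v => v.1 0) hne
  by_cases hab : a = b
  · obtain ⟨c, hc, hca⟩ := S.exists_mem_ne hcard a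
    refine ⟨a, ha, c, hc, hca.symm, hmax a ha ha_max, hmax c hc fun y hy => ?_⟩
    exact (ha_max y hy).trans (hab ▸ hb_min c hc)
  · exact ⟨a, ha, b, hb, hab, hmax a ha ha_max, hmin b hb hb_min⟩

/-- In the square shaped domain, for any `S ⊆ Ṽ°` with `#S ≥ 2`, every
point maximizing `x₁` over `S` is extreme, every point minimizing `x₁` is extreme, and
`S` has at least two extreme points (two-points condition). -/
theorem stmt_16 (d : ℕ) [NeZero d] (R : ℤ) (hR : 1 ≤ R)
    (S : Finset ↥(sqVerts d R)) (hSint : ∀ v ∈ S, v.1 ∈ sqInt d R)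
    (hcard : 2 ≤ S.card) :
    (∀ x ∈ S, (∀ y ∈ S, y.1 0 ≤ x.1 0) → sqExtreme d R S x) ∧
    (∀ x ∈ S, (∀ y ∈ S, x.1 0 ≤ y.1 0) → sqExtreme d R S x) ∧
    ∃ v ∈ S, ∃ w ∈ S, v ≠ w ∧ sqExtreme d R S v ∧ sqExtreme d R S w :=
  stmt_16_general d R S hSint hcard
end

section
/- Assume a periodic lattice Γ₀ admits, around every sufficiently large finite region Ω_R, a finite subgraph {Ṽ° ∪ ∂Ṽ, Ẽ} with Ω_R ⊂ Ṽ° that satisfies the two-points condition and the condition (A-5) (any two interior neighbors of a common boundary vertex are adjacent), and assume that on such subgraphs there is no nontrivial solution of (−Δ + V̂ − λ)û = 0 in Ṽ° satisfying both zero Dirichlet and zero Neumann conditions on ∂Ṽ. Then the unique continuation property holds on Γ₀: if û solves (Ĥ − λ)û = 0 on 𝒱₀ and û(n) = 0 for all |n| > R, then û ≡ 0 on 𝒱₀. -/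
open Finset

/-- The finite subgraph on `Ṽ° ∪ ∂Ṽ` whose edges are lattice edges with at least one
interior end point (no boundary-boundary edges). -/
def bdSubgraph {V : Type*} [DecidableEq V] (G : SimpleGraph V) (Vint Vbd : Finset V) :
    SimpleGraph ↥((Vint ∪ Vbd : Finset V) : Set V) where
  Adj a b := G.Adj a.1 b.1 ∧ (a.1 ∈ Vint ∨ b.1 ∈ Vint)
  symm := ⟨fun a b h => ⟨h.1.symm, h.2.symm⟩⟩
  loopless := ⟨fun a h => G.loopless.1 a.1 h.1⟩

/-- `v` is an extreme point of `S ⊆ Ṽ°` with respect to `∂Ṽ`: some boundary vertex `w`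
has `v` as its unique nearest vertex in `S` for the graph distance of the subgraph. -/
def bdExtreme {V : Type*} [DecidableEq V] (G : SimpleGraph V) (Vint Vbd : Finset V)
    (S : Finset ↥((Vint ∪ Vbd : Finset V) : Set V))
    (v : ↥((Vint ∪ Vbd : Finset V) : Set V)) : Prop :=
  v ∈ S ∧ ∃ w : ↥((Vint ∪ Vbd : Finset V) : Set V), w.1 ∈ Vbd ∧
    ∀ u ∈ S, u ≠ v → (bdSubgraph G Vint Vbd).dist w v < (bdSubgraph G Vint Vbd).dist w u

/-- The two-points condition: every `S ⊆ Ṽ°` with `#S ≥ 2` has at least two extreme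
points with respect to `∂Ṽ`. -/
def twoPointsCondition {V : Type*} [DecidableEq V] (G : SimpleGraph V)
    (Vint Vbd : Finset V) : Prop :=
  ∀ S : Finset ↥((Vint ∪ Vbd : Finset V) : Set V),
    (∀ v ∈ S, v.1 ∈ Vint) → 2 ≤ S.card →
      ∃ v ∈ S, ∃ w ∈ S, v ≠ w ∧ bdExtreme G Vint Vbd S v ∧ bdExtreme G Vint Vbd S w

/-! A solution vanishing outside `Ṽ°` has zero Dirichlet data on `∂Ṽ`, and the equation at a
boundary vertex `v` (where `û(v) = 0`) forces the neighbour sum, hence the Neumann data, to vanish.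
So the solution is a Dirichlet–Neumann null solution on the subgraph, which is excluded. -/

section

variable {V : Type*} (G : SimpleGraph V) [G.LocallyFinite]

theorem sum_neighborFinset_eq_zero_of_eq_zero {Vh : V → ℂ} {lam : ℂ} {u : V → ℂ} {v : V}
    (hv : -((G.degree v : ℂ))⁻¹ * ∑ w ∈ G.neighborFinset v, u w + Vh v * u v = lam * u v)
    (h0 : u v = 0) :
    ∑ w ∈ G.neighborFinset v, u w = 0 := by
  simp only [h0, mul_zero, add_zero, neg_mul, neg_eq_zero, mul_eq_zero, inv_eq_zero,
    Nat.cast_eq_zero] at hv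
  rcases hv with hdeg | hsum
  · rw [← G.card_neighborFinset_eq_degree, card_eq_zero] at hdeg
    rw [hdeg, sum_empty]
  · exact hsum

theorem sum_filter_neighborFinset_sub_eq_zero (s : Set V) [DecidablePred (· ∈ s)]
    {u : V → ℂ} {v : V} (hout : ∀ w ∉ s, u w = 0) (h0 : u v = 0)
    (hsum : ∑ w ∈ G.neighborFinset v, u w = 0) :
    ∑ w ∈ (G.neighborFinset v).filter (· ∈ s), (u w - u v) = 0 := by
  simp only [h0, sub_zero]
  rw [sum_filter_of_ne fun w _ hw => not_not.1 (mt (hout w) hw), hsum]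

end

theorem stmt_17_general {V : Type*} [DecidableEq V] (G : SimpleGraph V)
    [G.LocallyFinite] (ρ : V → ℝ) (Vh : V → ℂ) (lam : ℂ) (R : ℝ)
    (hsub : ∀ R' : ℝ, ∃ Vint Vbd : Finset V,
      (∀ v : V, ρ v ≤ R' → v ∈ Vint) ∧
      (∀ v : V, v ∈ Vbd ↔ v ∉ Vint ∧ ∃ w ∈ Vint, G.Adj v w) ∧
      -- (A-5): two interior neighbors of a common boundary vertex are adjacent
      (∀ z ∈ Vbd, ∀ v ∈ Vint, ∀ w ∈ Vint, G.Adj z v → G.Adj z w → v ≠ w → G.Adj v w) ∧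
      twoPointsCondition G Vint Vbd ∧
      -- no nontrivial Dirichlet–Neumann solution on the subgraph
      (∀ u : V → ℂ,
        (∀ v ∈ Vint,
          -((G.degree v : ℂ))⁻¹ * ∑ w ∈ G.neighborFinset v, u w + Vh v * u v
            - lam * u v = 0) →
        (∀ v ∈ Vbd, u v = 0) →
        (∀ v ∈ Vbd, ∑ w ∈ (G.neighborFinset v).filter (· ∈ Vint), (u w - u v) = 0) →
        ∀ v ∈ Vint, u v = 0))
    (u : V → ℂ)
    (hu : ∀ v : V,
      -((G.degree v : ℂ))⁻¹ * ∑ w ∈ G.neighborFinset v, u w + Vh v * u v = lam * u v)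
    (hvanish : ∀ v : V, R < ρ v → u v = 0) :
    ∀ v : V, u v = 0 := by
  obtain ⟨Vint, Vbd, hR, hbd, -, -, hDN⟩ := hsub R
  have hout : ∀ v ∉ Vint, u v = 0 := fun v hv => hvanish v (lt_of_not_ge (mt (hR v) hv))
  have hdir : ∀ v ∈ Vbd, u v = 0 := fun v hv => hout v ((hbd v).1 hv).1
  have hneu : ∀ v ∈ Vbd, ∑ w ∈ (G.neighborFinset v).filter (· ∈ Vint), (u w - u v) = 0 :=
    fun v hv => sum_filter_neighborFinset_sub_eq_zero G (Vint : Set V) hout (hdir v hv)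
      (sum_neighborFinset_eq_zero_of_eq_zero G (hu v) (hdir v hv))
  have hinterior := hDN u (fun v _ => sub_eq_zero.2 (hu v)) hdir hneu
  intro v
  by_cases hv : v ∈ Vint
  exacts [hinterior v hv, hout v hv]

/-- Suppose that around every sufficiently large finite region there is a
finite subgraph (interior ⊇ region, boundary = neighbors of interior) satisfying the
two-points condition and (A-5), on which there is no nontrivial solution of
`(−Δ + V̂ − λ)û = 0` with both zero Dirichlet and zero Neumann data on the boundary.
Then the unique continuation property holds: a solution of `(Ĥ − λ)û = 0` vanishing
outside a finite region vanishes identically. -/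
theorem stmt_17 {V : Type*} [DecidableEq V] (G : SimpleGraph V) [DecidableRel G.Adj]
    [G.LocallyFinite] (ρ : V → ℝ) (Vh : V → ℂ) (lam : ℂ) (R : ℝ)
    (hsub : ∀ R' : ℝ, ∃ Vint Vbd : Finset V,
      (∀ v : V, ρ v ≤ R' → v ∈ Vint) ∧
      (∀ v : V, v ∈ Vbd ↔ v ∉ Vint ∧ ∃ w ∈ Vint, G.Adj v w) ∧
      -- (A-5): two interior neighbors of a common boundary vertex are adjacent
      (∀ z ∈ Vbd, ∀ v ∈ Vint, ∀ w ∈ Vint, G.Adj z v → G.Adj z w → v ≠ w → G.Adj v w) ∧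
      twoPointsCondition G Vint Vbd ∧
      -- no nontrivial Dirichlet–Neumann solution on the subgraph
      (∀ u : V → ℂ,
        (∀ v ∈ Vint,
          -((G.degree v : ℂ))⁻¹ * ∑ w ∈ G.neighborFinset v, u w + Vh v * u v
            - lam * u v = 0) →
        (∀ v ∈ Vbd, u v = 0) →
        (∀ v ∈ Vbd, ∑ w ∈ (G.neighborFinset v).filter (· ∈ Vint), (u w - u v) = 0) →
        ∀ v ∈ Vint, u v = 0))
    (u : V → ℂ)
    (hu : ∀ v : V,
      -((G.degree v : ℂ))⁻¹ * ∑ w ∈ G.neighborFinset v, u w + Vh v * u v = lam * u v)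
    (hvanish : ∀ v : V, R < ρ v → u v = 0) :
    ∀ v : V, u v = 0 :=
  stmt_17_general G ρ Vh lam R hsub u hu hvanish
end
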